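/- For a chordal building set ℬ on a finite set S with no odd connected component, the map sending an alternating ℬ-permutation x = (x₁x₂⋯x_{2k}) to the chain (∅, {x₁,x₂}, {x₁,x₂,x₃,x₄}, …, S) is a bijection between the set of alternating ℬ-permutations on S and the set of maximal chains c of the poset P̂_ℬ such that the edge-label sequence μ_ℬ(c) has no decreasing position. -/

import Mathlib

/-- The restriction of a collection of finsets to subsets of `I`. -/
def BS.restrict (B : Finset (Finset ℕ)) (I : Finset ℕ) : Finset (Finset ℕ) :=
  B.filter (· ⊆ I)

/-- `B` is a building set on `S`. -/
def BS.IsBuilding (S : Finset ℕ) (B : Finset (Finset ℕ)) : Prop :=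
  (∀ J ∈ B, J ⊆ S ∧ J.Nonempty) ∧
  (∀ i ∈ S, ({i} : Finset ℕ) ∈ B) ∧
  (∀ I ∈ B, ∀ J ∈ B, (I ∩ J).Nonempty → I ∪ J ∈ B)

/-- `B` is chordal: every "suffix" `{x ∈ I : a ≤ x}` of an element `I` is in `B`. -/
def BS.IsChordal (B : Finset (Finset ℕ)) : Prop :=
  ∀ I ∈ B, ∀ a ∈ I, I.filter (fun x => a ≤ x) ∈ B

/-- A connected component of `B`: an inclusion-maximal element. -/
def BS.IsComponent (B : Finset (Finset ℕ)) (C : Finset ℕ) : Prop :=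
  C ∈ B ∧ ∀ J ∈ B, C ⊆ J → J = C

/-- The restriction of `B` to `I` has no connected component of odd cardinality. -/
def BS.NoOddComp (B : Finset (Finset ℕ)) (I : Finset ℕ) : Prop :=
  ∀ C ∈ BS.restrict B I, BS.IsComponent (BS.restrict B I) C → Even C.card

/-- The poset `P̂_B` of subsets of `S` whose restriction has no odd component. -/
def BS.hatP (B : Finset (Finset ℕ)) (S : Finset ℕ) : Set (Finset ℕ) :=
  {I | I ⊆ S ∧ BS.NoOddComp B I}

/-- `L` is a (one-line notation) permutation of the finite set `S`. -/
def BS.IsPermOf (S : Finset ℕ) (L : List ℕ) : Prop :=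
  L.Nodup ∧ L.toFinset = S

/-- `L` is a `B`-permutation: each entry lies in the same connected component of the
restriction of `B` to the prefix as the maximum of the prefix. -/
def BS.IsBPerm (B : Finset (Finset ℕ)) (S : Finset ℕ) (L : List ℕ) : Prop :=
  BS.IsPermOf S L ∧
  ∀ i, i < L.length →
    ∃ C : Finset ℕ, BS.IsComponent (BS.restrict B (L.take (i + 1)).toFinset) C ∧
      L.getD i 0 ∈ C ∧ ∃ M ∈ C, ∀ y ∈ (L.take (i + 1)).toFinset, y ≤ M

/-- `L` is alternating: `x₁ > x₂ < x₃ > x₄ < ⋯`. -/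
def BS.IsAlternating (L : List ℕ) : Prop :=
  ∀ i, i + 1 < L.length →
    (i % 2 = 0 → L.getD (i + 1) 0 < L.getD i 0) ∧
    (i % 2 = 1 → L.getD i 0 < L.getD (i + 1) 0)

/-- The maximum of a finset of naturals, as an integer (`0` for `∅`). -/
def BS.fmax (s : Finset ℕ) : ℤ := ((WithBot.unbotD 0 s.max : ℕ) : ℤ)

/-- The minimum of a finset of naturals, as an integer (`0` for `∅`). -/
def BS.fmin (s : Finset ℕ) : ℤ := ((WithTop.untopD 0 s.min : ℕ) : ℤ)

open Classical in
/-- The connected component `𝔠(I₂;I₁)` of `B|_{I₂}` containing `I₂ \ I₁`. -/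
noncomputable def BS.comp (B : Finset (Finset ℕ)) (I₁ I₂ : Finset ℕ) : Finset ℕ :=
  (BS.restrict B I₂).sup
    (fun C => if BS.IsComponent (BS.restrict B I₂) C ∧ I₂ \ I₁ ⊆ C then C else ∅)

/-- The edge label `μ_B(I₁,I₂) = (max 𝔠(I₂;I₁), (max I₂\I₁, min I₂\I₁))`. -/
noncomputable def BS.mu (B : Finset (Finset ℕ)) (I₁ I₂ : Finset ℕ) : ℤ × ℤ × ℤ :=
  (BS.fmax (BS.comp B I₁ I₂), BS.fmax (I₂ \ I₁), BS.fmin (I₂ \ I₁))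

/-- The partial order `≥` on `Ω = ℤ × ℤ` generated by the relations `ℛ₁` and `ℛ₂`. -/
def BS.omGe (a b : ℤ × ℤ) : Prop :=
  (a.1 ≥ a.2 ∧ a.2 ≥ b.1 ∧ b.1 ≥ b.2) ∨ (a.1 = b.1 ∧ b.1 ≥ a.2 ∧ a.2 ≥ b.2)

/-- The lexicographic order `⪰` on `ℤ × Ω`. -/
def BS.labGe (a b : ℤ × ℤ × ℤ) : Prop := a.1 > b.1 ∨ (a.1 = b.1 ∧ BS.omGe a.2 b.2)

/-- Strict version `≻` of the lexicographic order on labels. -/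
def BS.labGt (a b : ℤ × ℤ × ℤ) : Prop := BS.labGe a b ∧ a ≠ b

/-- `I₂` covers `I₁` in the poset `P̂_B`. -/
def BS.Covers (B : Finset (Finset ℕ)) (S : Finset ℕ) (I₁ I₂ : Finset ℕ) : Prop :=
  I₁ ∈ BS.hatP B S ∧ I₂ ∈ BS.hatP B S ∧ I₁ ⊂ I₂ ∧
    ∀ J ∈ BS.hatP B S, I₁ ⊂ J → ¬ J ⊂ I₂

/-- `c` is a maximal chain of `P̂_B` (a saturated chain from `∅` to `S`). -/
def BS.IsMaxChain (B : Finset (Finset ℕ)) (S : Finset ℕ) (c : List (Finset ℕ)) : Prop :=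
  c.Chain' (BS.Covers B S) ∧ c.head? = some ∅ ∧ c.getLast? = some S

/-- The label sequence of `c` has a decreasing position at (zero-based) index `i`. -/
noncomputable def BS.DecAt (B : Finset (Finset ℕ)) (c : List (Finset ℕ)) (i : ℕ) : Prop :=
  i + 2 < c.length ∧
    BS.labGt (BS.mu B (c.getD i ∅) (c.getD (i + 1) ∅))
      (BS.mu B (c.getD (i + 1) ∅) (c.getD (i + 2) ∅))

/-- The chain `(∅, {x₁,x₂}, {x₁,x₂,x₃,x₄}, …, S)` associated with a permutation `L`. -/
def chainOf (L : List ℕ) : List (Finset ℕ) :=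
  (List.range (L.length / 2 + 1)).map (fun i => (L.take (2 * i)).toFinset)

/-!
Call a step `J = I ∪ {a, b}` with `b < a` linked if `a`, `b` and `max J` lie in one component of
`B|J`. Its label is then `(max J, (a, b))`, and two consecutive linked steps form a descent
exactly when `a' < b`. By parity and chordality, every cover of `P̂_B` adds two elements of one
component. The steps of the chain of an alternating `B`-permutation are linked, and so,
inductively, are those of a maximal chain without descents; on linked chains alternation is the
absence of descents, so reading off the added pairs, larger element first, inverts `chainOf`.
-/

namespace BS

variable {S : Finset ℕ} {B : Finset (Finset ℕ)}

def natMax (s : Finset ℕ) : ℕ := WithBot.unbotD 0 s.max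

def natMin (s : Finset ℕ) : ℕ := WithTop.untopD 0 s.min

lemma fmax_eq_natMax (s : Finset ℕ) : fmax s = natMax s := rfl

lemma fmin_eq_natMin (s : Finset ℕ) : fmin s = natMin s := rfl

lemma natMax_mem {s : Finset ℕ} (h : s.Nonempty) : natMax s ∈ s := by
  obtain ⟨M, hM⟩ := Finset.max_of_nonempty h
  simpa [natMax, hM] using Finset.mem_of_max hM

lemma le_natMax {s : Finset ℕ} {y : ℕ} (hy : y ∈ s) : y ≤ natMax s := by
  obtain ⟨M, hM⟩ := Finset.max_of_nonempty ⟨y, hy⟩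
  simpa [natMax, hM] using Finset.le_max_of_eq hy hM

lemma natMin_mem {s : Finset ℕ} (h : s.Nonempty) : natMin s ∈ s := by
  obtain ⟨m, hm⟩ := Finset.min_of_nonempty h
  rw [natMin, hm]
  exact Finset.mem_of_min hm

lemma natMin_le {s : Finset ℕ} {y : ℕ} (hy : y ∈ s) : natMin s ≤ y := by
  obtain ⟨m, hm⟩ := Finset.min_of_nonempty ⟨y, hy⟩
  rw [natMin, hm]
  exact Finset.min_le_of_eq hy hm

lemma natMax_eq {s : Finset ℕ} {M : ℕ} (hM : M ∈ s) (h : ∀ y ∈ s, y ≤ M) : natMax s = M :=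
  le_antisymm (h _ (natMax_mem ⟨M, hM⟩)) (le_natMax hM)

lemma natMin_eq {s : Finset ℕ} {m : ℕ} (hm : m ∈ s) (h : ∀ y ∈ s, m ≤ y) : natMin s = m :=
  le_antisymm (natMin_le hm) (h _ (natMin_mem ⟨m, hm⟩))

lemma natMax_pair {a b : ℕ} (h : b < a) : natMax {a, b} = a :=
  natMax_eq (by simp) (by simp [h.le])

lemma natMin_pair {a b : ℕ} (h : b < a) : natMin {a, b} = b :=
  natMin_eq (by simp) (by simp [h.le])

lemma eq_pair_natMax_natMin {D : Finset ℕ} (h : D.card = 2) :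
    D = {natMax D, natMin D} ∧ natMin D < natMax D := by
  obtain ⟨x, y, hxy, rfl⟩ := Finset.card_eq_two.mp h
  rcases hxy.lt_or_gt with hlt | hlt
  · rw [Finset.pair_comm, natMax_pair hlt, natMin_pair hlt]
    exact ⟨rfl, hlt⟩
  · rw [natMax_pair hlt, natMin_pair hlt]
    exact ⟨rfl, hlt⟩

lemma exists_upperBound_mem_iff {C P : Finset ℕ} (hCP : C ⊆ P) :
    (∃ M ∈ C, ∀ y ∈ P, y ≤ M) ↔ natMax P ∈ C := by
  refine ⟨fun ⟨M, hMC, hM⟩ => ?_, fun h => ⟨_, h, fun _ => le_natMax⟩⟩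
  rwa [natMax_eq (hCP hMC) hM]

lemma mem_restrict {J I : Finset ℕ} : J ∈ restrict B I ↔ J ∈ B ∧ J ⊆ I := by
  simp [restrict]

lemma IsComponent.subset {I C : Finset ℕ} (hC : IsComponent (restrict B I) C) : C ⊆ I :=
  (mem_restrict.mp hC.1).2

lemma IsComponent.mem {I C : Finset ℕ} (hC : IsComponent (restrict B I) C) : C ∈ B :=
  (mem_restrict.mp hC.1).1

lemma exists_isComponent_superset {I J : Finset ℕ} (hJ : J ∈ restrict B I) :
    ∃ C, IsComponent (restrict B I) C ∧ J ⊆ C := by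
  set T := (restrict B I).filter (J ⊆ ·)
  obtain ⟨C, hCT, hCmax⟩ := T.exists_max_image Finset.card ⟨J, by simp [T, hJ]⟩
  obtain ⟨hC, hJC⟩ := Finset.mem_filter.mp hCT
  refine ⟨C, ⟨hC, fun K hK hCK => ?_⟩, hJC⟩
  exact (Finset.eq_of_subset_of_card_le hCK
    (hCmax K (Finset.mem_filter.mpr ⟨hK, hJC.trans hCK⟩))).symm

lemma exists_isComponent_mem (hB : IsBuilding S B) {I : Finset ℕ} (hI : I ⊆ S) {x : ℕ}
    (hx : x ∈ I) : ∃ C, IsComponent (restrict B I) C ∧ x ∈ C := by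
  obtain ⟨C, hC, hxC⟩ := exists_isComponent_superset
    (mem_restrict.mpr ⟨hB.2.1 x (hI hx), Finset.singleton_subset_iff.mpr hx⟩)
  exact ⟨C, hC, hxC (Finset.mem_singleton_self x)⟩

lemma IsComponent.subset_of_inter_nonempty (hB : IsBuilding S B) {I C D : Finset ℕ}
    (hC : IsComponent (restrict B I) C) (hD : D ∈ restrict B I) (h : (C ∩ D).Nonempty) :
    D ⊆ C := by
  have hCD : C ∪ D ∈ restrict B I := mem_restrict.mpr
    ⟨hB.2.2 C hC.mem D (mem_restrict.mp hD).1 h,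
      Finset.union_subset hC.subset (mem_restrict.mp hD).2⟩
  rw [← hC.2 _ hCD Finset.subset_union_left]
  exact Finset.subset_union_right

lemma IsComponent.eq_of_mem (hB : IsBuilding S B) {I C D : Finset ℕ}
    (hC : IsComponent (restrict B I) C) (hD : IsComponent (restrict B I) D) {x : ℕ}
    (hxC : x ∈ C) (hxD : x ∈ D) : C = D :=
  le_antisymm (hD.subset_of_inter_nonempty hB hC.1 ⟨x, by simp [hxC, hxD]⟩)
    (hC.subset_of_inter_nonempty hB hD.1 ⟨x, by simp [hxC, hxD]⟩)

lemma NoOddComp.even_card_filter (hB : IsBuilding S B) {I : Finset ℕ} (hI : I ⊆ S)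
    (hno : NoOddComp B I) (p : ℕ → Prop) [DecidablePred p]
    (hp : ∀ C, IsComponent (restrict B I) C → ∀ x ∈ C, p x → ∀ y ∈ C, p y) :
    Even (I.filter p).card := by
  classical
  set comps := (restrict B I).filter (fun C => IsComponent (restrict B I) C ∧ ∃ x ∈ C, p x)
  have hmem : ∀ C ∈ comps, IsComponent (restrict B I) C ∧ ∃ x ∈ C, p x :=
    fun C hC => (Finset.mem_filter.mp hC).2
  have hunion : I.filter p = comps.biUnion id := by
    ext x
    simp only [Finset.mem_filter, Finset.mem_biUnion, id]
    constructor
    · rintro ⟨hxI, hpx⟩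
      obtain ⟨C, hC, hxC⟩ := exists_isComponent_mem hB hI hxI
      exact ⟨C, Finset.mem_filter.mpr ⟨hC.1, hC, x, hxC, hpx⟩, hxC⟩
    · rintro ⟨C, hC, hxC⟩
      obtain ⟨hCcomp, y, hyC, hpy⟩ := hmem C hC
      exact ⟨hCcomp.subset hxC, hp C hCcomp y hyC hpy x hxC⟩
  rw [hunion, Finset.card_biUnion]
  · exact Finset.even_sum _ fun C hC => hno C (hmem C hC).1.1 (hmem C hC).1
  · intro C hC D hD hCD
    refine Finset.disjoint_left.mpr fun x hxC hxD => hCD ?_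
    exact (hmem C hC).1.eq_of_mem hB (hmem D hD).1 hxC hxD

lemma NoOddComp.even_card (hB : IsBuilding S B) {I : Finset ℕ} (hI : I ⊆ S)
    (hno : NoOddComp B I) : Even I.card := by
  simpa using hno.even_card_filter hB hI (fun _ => True) (by simp)

lemma NoOddComp.even_card_inter (hB : IsBuilding S B) {I J K : Finset ℕ} (hJ : J ⊆ S)
    (hIJ : I ⊆ J) (hno : NoOddComp B I) (hK : IsComponent (restrict B J) K) :
    Even (K ∩ I).card := by
  have h := hno.even_card_filter hB (hIJ.trans hJ) (· ∈ K) fun C hC x hxC hxK y hyC =>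
    hK.subset_of_inter_nonempty hB (mem_restrict.mpr ⟨hC.mem, hC.subset.trans hIJ⟩)
      ⟨x, by simp [hxK, hxC]⟩ hyC
  rwa [Finset.filter_mem_eq_inter, Finset.inter_comm] at h

lemma NoOddComp.even_card_sdiff (hB : IsBuilding S B) {I J K : Finset ℕ} (hJS : J ⊆ S)
    (hIJ : I ⊆ J) (hI : NoOddComp B I) (hJ : NoOddComp B J)
    (hK : IsComponent (restrict B J) K) : Even (K \ I).card := by
  have hsplit := Finset.card_sdiff_add_card_inter K I
  have hKI := hI.even_card_inter hB hJS hIJ hK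
  have hKe := hJ K hK.1 hK
  rw [← hsplit] at hKe
  exact (Nat.even_add.mp hKe).mpr hKI

lemma NoOddComp.of_sdiff_eq_pair (hB : IsBuilding S B) {I J L : Finset ℕ} {a b : ℕ}
    (hJS : J ⊆ S) (hIJ : I ⊆ J) (hI : NoOddComp B I) (hd : J \ I = {a, b}) (hab : a ≠ b)
    (hL : L ∈ restrict B J) (haL : a ∈ L) (hbL : b ∈ L) : NoOddComp B J := by
  intro K hKJ hK
  have hsplit := Finset.card_sdiff_add_card_inter K I
  have hKI := hI.even_card_inter hB hJS hIJ hK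
  have hab_mem : a ∈ K ↔ b ∈ K :=
    ⟨fun h => hK.subset_of_inter_nonempty hB hL ⟨a, by simp [h, haL]⟩ hbL,
      fun h => hK.subset_of_inter_nonempty hB hL ⟨b, by simp [h, hbL]⟩ haL⟩
  have hKd : K \ I = K ∩ {a, b} := by
    rw [← hd, ← Finset.inter_sdiff_assoc, Finset.inter_eq_left.mpr hK.subset]
  have hpair : Even (K \ I).card := by
    by_cases ha : a ∈ K
    · rw [hKd, Finset.inter_eq_right.mpr (by simp [Finset.insert_subset_iff, ha, hab_mem.mp ha]),
        Finset.card_pair hab]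
      exact even_two
    · rw [hKd, Finset.disjoint_iff_inter_eq_empty.mp (by simp [ha, ← hab_mem])]
      simp
  rw [← hsplit]
  exact hpair.add hKI

lemma exists_two_largest {D : Finset ℕ} (h : 2 ≤ D.card) :
    ∃ a ∈ D, ∃ b ∈ D, b < a ∧ ∀ x ∈ D, x = a ∨ x ≤ b := by
  have haD : natMax D ∈ D := natMax_mem (Finset.card_pos.mp (by omega))
  have hbD : natMax (D.erase (natMax D)) ∈ D.erase (natMax D) := natMax_mem <| by
    rw [← Finset.card_pos, Finset.card_erase_of_mem haD]; omega
  refine ⟨_, haD, _, Finset.mem_of_mem_erase hbD, lt_of_le_of_ne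
    (le_natMax (Finset.mem_of_mem_erase hbD)) (Finset.ne_of_mem_erase hbD), fun x hx => ?_⟩
  by_cases hxa : x = natMax D
  · exact Or.inl hxa
  · exact Or.inr (le_natMax (Finset.mem_erase.mpr ⟨hxa, hx⟩))

/-- Take the two largest new elements `b < a` of a component `C` of `B|J`: the suffix of `C`
from `b` joins them inside `I ∪ {a, b}`. -/
lemma exists_mem_hatP_sdiff_card_eq_two (hB : IsBuilding S B) (hc : IsChordal B)
    {I J : Finset ℕ} (hI : I ∈ hatP B S) (hJ : J ∈ hatP B S) (hIJ : I ⊂ J) :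
    ∃ J' ∈ hatP B S, I ⊂ J' ∧ J' ⊆ J ∧ (J' \ I).card = 2 := by
  obtain ⟨d, hd⟩ := Finset.sdiff_nonempty.mpr hIJ.2
  obtain ⟨C, hC, hdC⟩ := exists_isComponent_mem hB hJ.1 (Finset.mem_sdiff.mp hd).1
  obtain ⟨m, hm⟩ := hI.2.even_card_sdiff hB hJ.1 hIJ.subset hJ.2 hC
  have hpos := Finset.card_pos.mpr ⟨d, Finset.mem_sdiff.mpr ⟨hdC, (Finset.mem_sdiff.mp hd).2⟩⟩
  obtain ⟨a, haD, b, hbD, hba, htop⟩ := exists_two_largest (D := C \ I) (by omega)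
  obtain ⟨haC, haI⟩ := Finset.mem_sdiff.mp haD
  obtain ⟨hbC, hbI⟩ := Finset.mem_sdiff.mp hbD
  have hsuffix : C.filter (b ≤ ·) ⊆ I ∪ {a, b} := by
    intro x hx
    obtain ⟨hxC, hbx⟩ := Finset.mem_filter.mp hx
    by_cases hxI : x ∈ I
    · exact Finset.mem_union_left _ hxI
    · rcases htop x (Finset.mem_sdiff.mpr ⟨hxC, hxI⟩) with rfl | hxb
      · simp
      · simp [le_antisymm hxb hbx]
  have hJ'J : I ∪ {a, b} ⊆ J := Finset.union_subset hIJ.subset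
    (by simp [Finset.insert_subset_iff, hC.subset haC, hC.subset hbC])
  have hd' : (I ∪ {a, b}) \ I = {a, b} := Finset.union_sdiff_cancel_left (by simp [haI, hbI])
  refine ⟨I ∪ {a, b}, ⟨hJ'J.trans hJ.1, ?_⟩, ?_, hJ'J, by rw [hd', Finset.card_pair hba.ne']⟩
  · exact hI.2.of_sdiff_eq_pair hB (hJ'J.trans hJ.1) Finset.subset_union_left hd' hba.ne'
      (mem_restrict.mpr ⟨hc C hC.mem b hbC, hsuffix⟩) (by simp [haC, hba.le]) (by simp [hbC])
  · exact Finset.ssubset_iff_subset_ne.mpr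
      ⟨Finset.subset_union_left, fun h => haI (h ▸ by simp)⟩

lemma even_card_sdiff_of_mem_hatP (hB : IsBuilding S B) {I J : Finset ℕ} (hI : I ∈ hatP B S)
    (hJ : J ∈ hatP B S) (hIJ : I ⊆ J) : Even (J \ I).card := by
  rw [Finset.card_sdiff_of_subset hIJ, Nat.even_sub (Finset.card_le_card hIJ)]
  simp [hI.2.even_card hB hI.1, hJ.2.even_card hB hJ.1]

lemma covers_iff (hB : IsBuilding S B) (hc : IsChordal B) {I J : Finset ℕ} :
    Covers B S I J ↔ I ∈ hatP B S ∧ J ∈ hatP B S ∧ I ⊂ J ∧ (J \ I).card = 2 := by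
  constructor
  · rintro ⟨hI, hJ, hIJ, hmin⟩
    refine ⟨hI, hJ, hIJ, ?_⟩
    obtain ⟨J', hJ', hIJ', hJ'J, hcard⟩ := exists_mem_hatP_sdiff_card_eq_two hB hc hI hJ hIJ
    by_contra hne
    refine hmin J' hJ' hIJ' (Finset.ssubset_iff_subset_ne.mpr ⟨hJ'J, fun h => hne ?_⟩)
    rwa [← h]
  · rintro ⟨hI, hJ, hIJ, hcard⟩
    refine ⟨hI, hJ, hIJ, fun J' hJ' hIJ' hJ'J => ?_⟩
    have hlt : (J' \ I).card < (J \ I).card :=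
      Finset.card_lt_card (sdiff_lt_sdiff_right hJ'J hIJ'.subset)
    obtain ⟨m, hm⟩ := even_card_sdiff_of_mem_hatP hB hI hJ' hIJ'.subset
    have := Finset.card_pos.mpr (Finset.sdiff_nonempty.mpr hIJ'.2)
    omega

lemma comp_eq (hB : IsBuilding S B) {I J K : Finset ℕ} (hK : IsComponent (restrict B J) K)
    (hsub : J \ I ⊆ K) (hne : (J \ I).Nonempty) : comp B I J = K := by
  unfold comp
  refine le_antisymm (Finset.sup_le fun D hD => ?_) ?_
  · split_ifs with h
    · obtain ⟨d, hd⟩ := hne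
      exact hK.subset_of_inter_nonempty hB h.1.1 ⟨d, by simp [hsub hd, h.2 hd]⟩
    · exact bot_le
  · convert Finset.le_sup (f := fun D => if IsComponent (restrict B J) D ∧ J \ I ⊆ D then D
      else ∅) hK.1
    simp [hK, hsub]

structure IsLinkedStep (B : Finset (Finset ℕ)) (I J : Finset ℕ) (a b : ℕ) : Prop where
  subset : I ⊆ J
  sdiff_eq : J \ I = {a, b}
  lt : b < a
  exists_component : ∃ K, IsComponent (restrict B J) K ∧ a ∈ K ∧ b ∈ K ∧ natMax J ∈ K

namespace IsLinkedStep

variable {I J J' : Finset ℕ} {a b a' b' : ℕ}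

lemma left_mem_sdiff (h : IsLinkedStep B I J a b) : a ∈ J \ I := by
  simp [h.sdiff_eq]

lemma right_mem_sdiff (h : IsLinkedStep B I J a b) : b ∈ J \ I := by
  simp [h.sdiff_eq]

lemma mu_eq (hB : IsBuilding S B) (h : IsLinkedStep B I J a b) :
    mu B I J = ((natMax J : ℤ), (a : ℤ), (b : ℤ)) := by
  obtain ⟨K, hK, haK, hbK, hMK⟩ := h.exists_component
  have hcomp : comp B I J = K :=
    comp_eq hB hK (by simp [h.sdiff_eq, Finset.insert_subset_iff, haK, hbK])
      ⟨a, h.left_mem_sdiff⟩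
  simp only [mu, fmax_eq_natMax, fmin_eq_natMin, hcomp, h.sdiff_eq, natMax_pair h.lt,
    natMin_pair h.lt, natMax_eq hMK fun y hy => le_natMax (hK.subset hy)]

lemma noOddComp (hB : IsBuilding S B) (h : IsLinkedStep B I J a b) (hJS : J ⊆ S)
    (hI : NoOddComp B I) : NoOddComp B J := by
  obtain ⟨K, hK, haK, hbK, -⟩ := h.exists_component
  exact hI.of_sdiff_eq_pair hB hJS h.subset h.sdiff_eq h.lt.ne' hK.1 haK hbK

lemma covers (hB : IsBuilding S B) (hc : IsChordal B) (h : IsLinkedStep B I J a b)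
    (hI : I ∈ hatP B S) (hJS : J ⊆ S) : Covers B S I J := by
  refine (covers_iff hB hc).mpr ⟨hI, ⟨hJS, h.noOddComp hB hJS hI.2⟩, ?_, ?_⟩
  · exact Finset.ssubset_iff_subset_ne.mpr
      ⟨h.subset, fun hIJ => by simpa [hIJ] using h.left_mem_sdiff⟩
  · rw [h.sdiff_eq, Finset.card_pair h.lt.ne']

/-- Along two consecutive linked steps the maximum can only grow by the new element `a'`, so
the only possible descent is `a' < b` under an unchanged maximum. -/
lemma not_labGt_iff (hB : IsBuilding S B) (h : IsLinkedStep B I J a b)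
    (h' : IsLinkedStep B J J' a' b') : ¬ labGt (mu B I J) (mu B J J') ↔ b < a' := by
  have haJ := (Finset.mem_sdiff.mp h.left_mem_sdiff).1
  have hbJ := (Finset.mem_sdiff.mp h.right_mem_sdiff).1
  obtain ⟨ha'J', ha'J⟩ := Finset.mem_sdiff.mp h'.left_mem_sdiff
  have ha'a : a' ≠ a := fun e => ha'J (e ▸ haJ)
  have ha'b : a' ≠ b := fun e => ha'J (e ▸ hbJ)
  have haM := le_natMax haJ
  have hMM' : natMax J ≤ natMax J' := le_natMax (h'.subset (natMax_mem ⟨a, haJ⟩))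
  have hnew (hlt : natMax J < natMax J') : a' = natMax J' := by
    have hmem : natMax J' ∈ J' \ J := Finset.mem_sdiff.mpr
      ⟨natMax_mem ⟨a', ha'J'⟩, fun hJ => (le_natMax hJ).not_gt hlt⟩
    rw [h'.sdiff_eq, Finset.mem_insert, Finset.mem_singleton] at hmem
    have := le_natMax ha'J'
    have := h'.lt
    omega
  rw [h.mu_eq hB, h'.mu_eq hB]
  simp only [labGt, labGe, omGe, ne_eq, Prod.mk.injEq]
  have := h.lt
  have := h'.lt
  omega

lemma natMax_insert (h : IsLinkedStep B I J a b) : natMax (insert a I) = natMax J := by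
  have haJ := (Finset.mem_sdiff.mp h.left_mem_sdiff).1
  have hsub : insert a I ⊆ J := Finset.insert_subset haJ h.subset
  refine natMax_eq ?_ fun y hy => le_natMax (hsub hy)
  have hmem := natMax_mem ⟨a, haJ⟩
  by_cases hI : natMax J ∈ I
  · exact Finset.mem_insert_of_mem hI
  · have hnew : natMax J ∈ J \ I := Finset.mem_sdiff.mpr ⟨hmem, hI⟩
    rw [h.sdiff_eq, Finset.mem_insert, Finset.mem_singleton] at hnew
    have := le_natMax haJ
    have := h.lt
    rw [show natMax J = a by omega]
    exact Finset.mem_insert_self a I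

/-- The suffix from `a` of the component joining `a` to `max J` lies in `I ∪ {a}`, because
`b < a`. -/
lemma exists_component_insert (hc : IsChordal B) (h : IsLinkedStep B I J a b) :
    ∃ C, IsComponent (restrict B (insert a I)) C ∧ a ∈ C ∧ natMax (insert a I) ∈ C := by
  obtain ⟨K, hK, haK, -, hMK⟩ := h.exists_component
  have hsuffix : K.filter (a ≤ ·) ⊆ insert a I := by
    intro x hx
    obtain ⟨hxK, hax⟩ := Finset.mem_filter.mp hx
    by_cases hxI : x ∈ I
    · exact Finset.mem_insert_of_mem hxI
    · have hnew : x ∈ J \ I := Finset.mem_sdiff.mpr ⟨hK.subset hxK, hxI⟩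
      rw [h.sdiff_eq, Finset.mem_insert, Finset.mem_singleton] at hnew
      have := h.lt
      rw [Finset.mem_insert]
      omega
  obtain ⟨C, hC, hsuffC⟩ := exists_isComponent_superset
    (mem_restrict.mpr ⟨hc K hK.mem a haK, hsuffix⟩)
  refine ⟨C, hC, hsuffC (by simp [haK]), hsuffC ?_⟩
  rw [h.natMax_insert]
  exact Finset.mem_filter.mpr ⟨hMK, h.natMax_insert ▸ le_natMax (Finset.mem_insert_self a I)⟩

end IsLinkedStep

/-- A component of `B|J` containing one of the two new elements gains an even number of them. -/
lemma Covers.exists_component (hB : IsBuilding S B) (hc : IsChordal B) {I J : Finset ℕ}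
    (h : Covers B S I J) : ∃ K, IsComponent (restrict B J) K ∧ J \ I ⊆ K := by
  obtain ⟨hI, hJ, hIJ, hcard⟩ := (covers_iff hB hc).mp h
  obtain ⟨d, hd⟩ := Finset.card_pos.mp (hcard ▸ two_pos)
  obtain ⟨K, hK, hdK⟩ := exists_isComponent_mem hB hJ.1 (Finset.mem_sdiff.mp hd).1
  have hKd : K \ I ⊆ J \ I := Finset.sdiff_subset_sdiff hK.subset le_rfl
  obtain ⟨m, hm⟩ := hI.2.even_card_sdiff hB hJ.1 hIJ.subset hJ.2 hK
  have hpos := Finset.card_pos.mpr ⟨d, Finset.mem_sdiff.mpr ⟨hdK, (Finset.mem_sdiff.mp hd).2⟩⟩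
  have heq : K \ I = J \ I := Finset.eq_of_subset_of_card_le hKd (by omega)
  exact ⟨K, hK, heq ▸ Finset.sdiff_subset⟩

lemma Covers.isLinkedStep (hB : IsBuilding S B) (hc : IsChordal B) {I J : Finset ℕ}
    (h : Covers B S I J)
    (hmax : ∀ K, IsComponent (restrict B J) K → J \ I ⊆ K → natMax J ∈ K) :
    IsLinkedStep B I J (natMax (J \ I)) (natMin (J \ I)) := by
  have hcard := ((covers_iff hB hc).mp h).2.2.2
  have hne : (J \ I).Nonempty := Finset.card_pos.mp (by omega)
  obtain ⟨hpair, hlt⟩ := eq_pair_natMax_natMin hcard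
  obtain ⟨K, hK, hsub⟩ := h.exists_component hB hc
  exact ⟨h.2.2.1.subset, hpair, hlt, K, hK, hsub (natMax_mem hne), hsub (natMin_mem hne),
    hmax K hK hsub⟩

/-- Otherwise the first coordinate of the labels drops from `max J` to the maximum of the
component of the new pair. -/
lemma IsLinkedStep.next_of_not_labGt (hB : IsBuilding S B) (hc : IsChordal B)
    {I J J' : Finset ℕ} {a b : ℕ}
    (h : IsLinkedStep B I J a b) (hcov : Covers B S J J')
    (hdesc : ¬ labGt (mu B I J) (mu B J J')) :
    IsLinkedStep B J J' (natMax (J' \ J)) (natMin (J' \ J)) := by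
  refine hcov.isLinkedStep hB hc fun K hK hsub => ?_
  by_contra hMK
  have hJJ' := hcov.2.2.1.subset
  have haJ := (Finset.mem_sdiff.mp h.left_mem_sdiff).1
  have hMJ : natMax J' ∈ J := by
    by_contra hMJ
    exact hMK (hsub (Finset.mem_sdiff.mpr ⟨natMax_mem ⟨a, hJJ' haJ⟩, hMJ⟩))
  have hMM : natMax J' = natMax J :=
    le_antisymm (le_natMax hMJ) (le_natMax (hJJ' (natMax_mem ⟨a, haJ⟩)))
  obtain ⟨d, hd⟩ := Finset.sdiff_nonempty.mpr hcov.2.2.1.2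
  have hKmax : natMax K < natMax J := by
    have hmem := natMax_mem ⟨d, hsub hd⟩
    exact hMM ▸ lt_of_le_of_ne (le_natMax (hK.subset hmem)) fun e => hMK (e ▸ hmem)
  apply hdesc
  rw [h.mu_eq hB]
  simp only [labGt, labGe, mu, comp_eq hB hK hsub ⟨d, hd⟩, fmax_eq_natMax, ne_eq,
    Prod.mk.injEq]
  omega

section Lists

variable {L : List ℕ} {i j : ℕ}

lemma toFinset_take_succ (h : j < L.length) :
    (L.take (j + 1)).toFinset = insert (L.getD j 0) (L.take j).toFinset := by
  rw [List.take_add_one, List.getElem?_eq_getElem h, List.toFinset_append,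
    List.getD_eq_getElem _ _ h, Finset.insert_eq, Finset.union_comm]
  simp

lemma toFinset_take_mono {m n : ℕ} (h : m ≤ n) : (L.take m).toFinset ⊆ (L.take n).toFinset :=
  fun _ hx => List.mem_toFinset.mpr (List.take_subset_take_left L h (List.mem_toFinset.mp hx))

lemma getD_notMem_toFinset_take (hnd : L.Nodup) (h : j < L.length) :
    L.getD j 0 ∉ (L.take j).toFinset := by
  have hnd' := (List.take_sublist (j + 1) L).nodup hnd
  rw [List.take_add_one, List.getElem?_eq_getElem h, List.nodup_append] at hnd'
  rw [List.getD_eq_getElem _ _ h, List.mem_toFinset]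
  exact fun hmem => hnd'.2.2 _ hmem _ (by simp) rfl

lemma toFinset_take_add_two_sdiff (hnd : L.Nodup) (h : j + 1 < L.length) :
    (L.take (j + 2)).toFinset \ (L.take j).toFinset = {L.getD j 0, L.getD (j + 1) 0} := by
  have ha := getD_notMem_toFinset_take hnd (j := j) (by omega)
  have hb : L.getD (j + 1) 0 ∉ (L.take j).toFinset := fun hmem =>
    getD_notMem_toFinset_take hnd h (toFinset_take_mono (Nat.le_succ j) hmem)
  rw [toFinset_take_succ h, toFinset_take_succ (by omega)]
  ext x
  simp only [Finset.mem_sdiff, Finset.mem_insert, Finset.mem_singleton]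
  constructor
  · tauto
  · rintro (rfl | rfl) <;> simp_all

lemma IsAlternating.getD_lt_of_even (halt : IsAlternating L) (h : 2 * i + 1 < L.length) :
    L.getD (2 * i + 1) 0 < L.getD (2 * i) 0 :=
  (halt (2 * i) h).1 (by omega)

lemma IsAlternating.getD_lt_of_odd (halt : IsAlternating L) (h : 2 * i + 2 < L.length) :
    L.getD (2 * i + 1) 0 < L.getD (2 * i + 2) 0 :=
  (halt (2 * i + 1) h).2 (by omega)

lemma IsPermOf.length_eq (h : IsPermOf S L) : L.length = S.card := by
  rw [← h.2, List.toFinset_card_of_nodup h.1]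

lemma chainOf_length (L : List ℕ) : (chainOf L).length = L.length / 2 + 1 := by
  simp [chainOf]

lemma chainOf_getD (h : i ≤ L.length / 2) :
    (chainOf L).getD i ∅ = (L.take (2 * i)).toFinset := by
  simp [chainOf, List.getD_eq_getElem?_getD, Nat.lt_succ_of_le h]

end Lists

lemma isBPerm_iff {L : List ℕ} :
    IsBPerm B S L ↔ IsPermOf S L ∧ ∀ j < L.length, ∃ C,
      IsComponent (restrict B (L.take (j + 1)).toFinset) C ∧ L.getD j 0 ∈ C ∧
        natMax (L.take (j + 1)).toFinset ∈ C :=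
  and_congr_right fun _ => forall₂_congr fun _ _ => exists_congr fun _ =>
    and_congr_right fun hC => and_congr_right fun _ => exists_upperBound_mem_iff hC.subset

/-- The `B`-permutation conditions at `x_{2i+1}` and `x_{2i+2}` join both to the maximum of
`{x₁, …, x_{2i+2}}`, which by `x_{2i+1} > x_{2i+2}` is already the maximum of
`{x₁, …, x_{2i+1}}`. -/
lemma isLinkedStep_of_isBPerm (hB : IsBuilding S B) {L : List ℕ} (hbp : IsBPerm B S L)
    (halt : IsAlternating L) {i : ℕ} (h : 2 * i + 1 < L.length) :
    IsLinkedStep B (L.take (2 * i)).toFinset (L.take (2 * (i + 1))).toFinset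
      (L.getD (2 * i) 0) (L.getD (2 * i + 1) 0) := by
  rw [mul_add, mul_one]
  obtain ⟨hperm, hcomp⟩ := isBPerm_iff.mp hbp
  have hba := halt.getD_lt_of_even h
  obtain ⟨C, hC, hbC, hMC⟩ := hcomp (2 * i + 1) h
  obtain ⟨C', hC', haC', hM'C'⟩ := hcomp (2 * i) (by omega)
  have hP : (L.take (2 * i + 2)).toFinset = insert (L.getD (2 * i + 1) 0)
      (L.take (2 * i + 1)).toFinset := toFinset_take_succ h
  have hMM : natMax (L.take (2 * i + 2)).toFinset = natMax (L.take (2 * i + 1)).toFinset := by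
    rw [hP]
    refine natMax_eq (Finset.mem_insert_of_mem (natMax_mem ⟨_, hC'.subset haC'⟩)) ?_
    rintro y hy
    rcases Finset.mem_insert.mp hy with rfl | hy
    · exact hba.le.trans (le_natMax (hC'.subset haC'))
    · exact le_natMax hy
  have hC'C : C' ⊆ C := hC.subset_of_inter_nonempty hB
    (mem_restrict.mpr ⟨hC'.mem, hC'.subset.trans (toFinset_take_mono (by omega))⟩)
    ⟨_, Finset.mem_inter.mpr ⟨hMC, hMM ▸ hM'C'⟩⟩
  exact ⟨toFinset_take_mono (by omega), toFinset_take_add_two_sdiff hperm.1 h, hba,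
    C, hC, hC'C haC', hbC, hMC⟩

lemma toFinset_take_mem_hatP (hB : IsBuilding S B) {L : List ℕ} (hbp : IsBPerm B S L)
    (halt : IsAlternating L) : ∀ i, 2 * i ≤ L.length → (L.take (2 * i)).toFinset ∈ hatP B S
  | 0, _ => ⟨by simp, fun K hK => absurd ((hB.1 K (mem_restrict.mp hK).1).2)
      (by simpa using (mem_restrict.mp hK).2)⟩
  | i + 1, h => by
    have hS : (L.take (2 * (i + 1))).toFinset ⊆ S := hbp.1.2 ▸ fun _ hx =>
      List.mem_toFinset.mpr (List.take_subset _ _ (List.mem_toFinset.mp hx))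
    exact ⟨hS, (isLinkedStep_of_isBPerm hB hbp halt (by omega)).noOddComp hB hS
      (toFinset_take_mem_hatP hB hbp halt i (by omega)).2⟩

lemma isMaxChain_iff {c : List (Finset ℕ)} :
    IsMaxChain B S c ↔ 0 < c.length ∧ c.getD 0 ∅ = ∅ ∧ c.getD (c.length - 1) ∅ = S ∧
      ∀ i, i + 1 < c.length → Covers B S (c.getD i ∅) (c.getD (i + 1) ∅) := by
  rcases Nat.eq_zero_or_pos c.length with hnil | hpos
  · simp [IsMaxChain, List.length_eq_zero_iff.mp hnil]
  · simp only [IsMaxChain, List.Chain', List.isChain_iff_getElem, List.head?_eq_getElem?,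
      List.getLast?_eq_getElem?, List.getElem?_eq_getElem hpos,
      List.getElem?_eq_getElem (Nat.sub_lt hpos one_pos), Option.some_inj,
      List.getD_eq_getElem?_getD]
    constructor
    · rintro ⟨hch, h0, hl⟩
      refine ⟨hpos, by simp [h0], by simp [hl], fun i hi => ?_⟩
      simpa [List.getElem?_eq_getElem hi, List.getElem?_eq_getElem (Nat.lt_of_succ_lt hi)]
        using hch i hi
    · rintro ⟨-, h0, hl, hch⟩
      refine ⟨fun i hi => ?_, by simpa [hpos] using h0, by simpa [hpos] using hl⟩
      simpa [List.getElem?_eq_getElem hi, List.getElem?_eq_getElem (Nat.lt_of_succ_lt hi)]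
        using hch i hi

variable {L : List ℕ}

lemma even_length_of_isBPerm (hB : IsBuilding S B) (hno : NoOddComp B S)
    (hbp : IsBPerm B S L) : Even L.length :=
  hbp.1.length_eq ▸ hno.even_card hB subset_rfl

lemma isMaxChain_chainOf (hB : IsBuilding S B) (hc : IsChordal B) (hno : NoOddComp B S)
    (hbp : IsBPerm B S L) (halt : IsAlternating L) : IsMaxChain B S (chainOf L) := by
  obtain ⟨k, hk⟩ := even_length_of_isBPerm hB hno hbp
  refine isMaxChain_iff.mpr ⟨by simp [chainOf_length], ?_, ?_, ?_⟩
  · rw [chainOf_getD (Nat.zero_le _)]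
    simp
  · rw [chainOf_length, Nat.add_sub_cancel, chainOf_getD le_rfl,
      show 2 * (L.length / 2) = L.length by omega, List.take_length, hbp.1.2]
  · intro i hi
    rw [chainOf_length] at hi
    rw [chainOf_getD (by omega), chainOf_getD (by omega)]
    exact (isLinkedStep_of_isBPerm hB hbp halt (by omega)).covers hB hc
      (toFinset_take_mem_hatP hB hbp halt i (by omega))
      (toFinset_take_mem_hatP hB hbp halt (i + 1) (by omega)).1

lemma not_decAt_chainOf (hB : IsBuilding S B) (hbp : IsBPerm B S L) (halt : IsAlternating L)
    (i : ℕ) : ¬ DecAt B (chainOf L) i := by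
  rintro ⟨hi, hgt⟩
  rw [chainOf_length] at hi
  rw [chainOf_getD (by omega), chainOf_getD (by omega), chainOf_getD (by omega)] at hgt
  have h := isLinkedStep_of_isBPerm hB hbp halt (i := i) (by omega)
  have h' := isLinkedStep_of_isBPerm hB hbp halt (i := i + 1) (by omega)
  exact (h.not_labGt_iff hB h').mpr (halt.getD_lt_of_odd (by omega)) hgt

def stepMax (c : List (Finset ℕ)) (i : ℕ) : ℕ := natMax (c.getD (i + 1) ∅ \ c.getD i ∅)

def stepMin (c : List (Finset ℕ)) (i : ℕ) : ℕ := natMin (c.getD (i + 1) ∅ \ c.getD i ∅)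

def permOfChain (c : List (Finset ℕ)) : List ℕ :=
  (List.range (2 * (c.length - 1))).map fun j =>
    if j % 2 = 0 then stepMax c (j / 2) else stepMin c (j / 2)

def IsLinkedChain (B : Finset (Finset ℕ)) (c : List (Finset ℕ)) : Prop :=
  ∀ i, i + 1 < c.length →
    IsLinkedStep B (c.getD i ∅) (c.getD (i + 1) ∅) (stepMax c i) (stepMin c i)

variable {c : List (Finset ℕ)}

lemma isLinkedChain_of_isMaxChain (hB : IsBuilding S B) (hc : IsChordal B)
    (hmc : IsMaxChain B S c) (hnd : ∀ i, ¬ DecAt B c i) : IsLinkedChain B c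
  | 0, h => by
    obtain ⟨-, h0, -, hcov⟩ := isMaxChain_iff.mp hmc
    refine (hcov 0 h).isLinkedStep hB hc fun K _ hsub => hsub ?_
    obtain ⟨x, hx⟩ := Finset.sdiff_nonempty.mpr (hcov 0 h).2.2.1.2
    rw [h0, Finset.sdiff_empty] at hx ⊢
    exact natMax_mem ⟨x, hx⟩
  | i + 1, h =>
    (isLinkedChain_of_isMaxChain hB hc hmc hnd i (by omega)).next_of_not_labGt hB hc
      ((isMaxChain_iff.mp hmc).2.2.2 (i + 1) h) fun hgt => hnd i ⟨h, hgt⟩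

lemma permOfChain_length (c : List (Finset ℕ)) :
    (permOfChain c).length = 2 * (c.length - 1) := by
  simp [permOfChain]

lemma permOfChain_getD_two_mul {i : ℕ} (h : i + 1 < c.length) :
    (permOfChain c).getD (2 * i) 0 = stepMax c i := by
  rw [List.getD_eq_getElem _ _ (by rw [permOfChain_length]; omega)]
  simp [permOfChain]

lemma permOfChain_getD_two_mul_add_one {i : ℕ} (h : i + 1 < c.length) :
    (permOfChain c).getD (2 * i + 1) 0 = stepMin c i := by
  rw [List.getD_eq_getElem _ _ (by rw [permOfChain_length]; omega)]
  simp [permOfChain, Nat.add_mod, show (2 * i + 1) / 2 = i by omega]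

lemma toFinset_take_permOfChain (h0 : c.getD 0 ∅ = ∅) (hlink : IsLinkedChain B c) :
    ∀ i, i < c.length → ((permOfChain c).take (2 * i)).toFinset = c.getD i ∅
  | 0, _ => by rw [h0]; simp
  | i + 1, h => by
    have hlen : 2 * i + 1 < (permOfChain c).length := by rw [permOfChain_length]; omega
    rw [mul_add, mul_one, toFinset_take_succ hlen, toFinset_take_succ (by omega),
      permOfChain_getD_two_mul h, permOfChain_getD_two_mul_add_one h,
      toFinset_take_permOfChain h0 hlink i (by omega), ← Finset.union_sdiff_of_subset
      (hlink i h).subset, (hlink i h).sdiff_eq]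
    ext x
    simp only [Finset.mem_insert, Finset.mem_union, Finset.mem_singleton]
    tauto

lemma card_getD_of_isLinkedChain (h0 : c.getD 0 ∅ = ∅) (hlink : IsLinkedChain B c) :
    ∀ i, i < c.length → (c.getD i ∅).card = 2 * i
  | 0, _ => by rw [h0]; simp
  | i + 1, h => by
    rw [← Finset.card_sdiff_add_card_eq_card (hlink i h).subset, (hlink i h).sdiff_eq,
      Finset.card_pair (hlink i h).lt.ne', card_getD_of_isLinkedChain h0 hlink i (by omega)]
    ring

lemma isPermOf_permOfChain (hmc : IsMaxChain B S c) (hlink : IsLinkedChain B c) :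
    IsPermOf S (permOfChain c) := by
  obtain ⟨hpos, h0, hlast, -⟩ := isMaxChain_iff.mp hmc
  have htf : (permOfChain c).toFinset = c.getD (c.length - 1) ∅ := by
    rw [← toFinset_take_permOfChain h0 hlink _ (by omega), ← permOfChain_length,
      List.take_length]
  refine ⟨Multiset.coe_nodup.mp (Multiset.toFinset_card_eq_card_iff_nodup.mp ?_),
    htf.trans hlast⟩
  change (permOfChain c).toFinset.card = (permOfChain c).length
  rw [htf, card_getD_of_isLinkedChain h0 hlink _ (by omega), permOfChain_length]

lemma isBPerm_permOfChain (hc : IsChordal B) (hmc : IsMaxChain B S c)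
    (hlink : IsLinkedChain B c) : IsBPerm B S (permOfChain c) := by
  have h0 := (isMaxChain_iff.mp hmc).2.1
  refine isBPerm_iff.mpr ⟨isPermOf_permOfChain hmc hlink, fun j hj => ?_⟩
  rw [permOfChain_length] at hj
  obtain ⟨i, rfl | rfl⟩ : ∃ i, j = 2 * i ∨ j = 2 * i + 1 := ⟨j / 2, by omega⟩
  · rw [toFinset_take_succ (by rw [permOfChain_length]; omega), permOfChain_getD_two_mul
      (by omega), toFinset_take_permOfChain h0 hlink i (by omega)]
    exact (hlink i (by omega)).exists_component_insert hc
  · rw [show 2 * i + 1 + 1 = 2 * (i + 1) by ring,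
      toFinset_take_permOfChain h0 hlink (i + 1) (by omega),
      permOfChain_getD_two_mul_add_one (by omega)]
    obtain ⟨K, hK, -, hbK, hMK⟩ := (hlink i (by omega)).exists_component
    exact ⟨K, hK, hbK, hMK⟩

lemma isAlternating_permOfChain (hB : IsBuilding S B) (hlink : IsLinkedChain B c)
    (hnd : ∀ i, ¬ DecAt B c i) : IsAlternating (permOfChain c) := by
  intro j hj
  rw [permOfChain_length] at hj
  obtain ⟨i, rfl | rfl⟩ : ∃ i, j = 2 * i ∨ j = 2 * i + 1 := ⟨j / 2, by omega⟩
  · refine ⟨fun _ => ?_, fun h => by omega⟩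
    rw [permOfChain_getD_two_mul_add_one (by omega), permOfChain_getD_two_mul (by omega)]
    exact (hlink i (by omega)).lt
  · refine ⟨fun h => by omega, fun _ => ?_⟩
    rw [permOfChain_getD_two_mul_add_one (by omega), show 2 * i + 1 + 1 = 2 * (i + 1) by ring,
      permOfChain_getD_two_mul (by omega)]
    exact ((hlink i (by omega)).not_labGt_iff hB (hlink (i + 1) (by omega))).mp
      fun hgt => hnd i ⟨by omega, hgt⟩

lemma chainOf_permOfChain (hmc : IsMaxChain B S c) (hlink : IsLinkedChain B c) :
    chainOf (permOfChain c) = c := by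
  obtain ⟨hpos, h0, -⟩ := isMaxChain_iff.mp hmc
  refine List.ext_getElem (by rw [chainOf_length, permOfChain_length]; omega) fun i h1 h2 => ?_
  rw [← List.getD_eq_getElem _ ∅ h1, ← List.getD_eq_getElem _ ∅ h2,
    chainOf_getD (by rw [permOfChain_length]; omega), toFinset_take_permOfChain h0 hlink i h2]

lemma permOfChain_chainOf {L : List ℕ} (hnd : L.Nodup) (halt : IsAlternating L)
    (heven : Even L.length) : permOfChain (chainOf L) = L := by
  obtain ⟨k, hk⟩ := heven
  refine List.ext_getElem (by rw [permOfChain_length, chainOf_length]; omega) fun j h1 h2 => ?_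
  rw [← List.getD_eq_getElem _ 0 h1, ← List.getD_eq_getElem _ 0 h2]
  have hstep (i : ℕ) (hi : 2 * i + 1 < L.length) :
      (chainOf L).getD (i + 1) ∅ \ (chainOf L).getD i ∅ =
        {L.getD (2 * i) 0, L.getD (2 * i + 1) 0} := by
    rw [chainOf_getD (by omega), chainOf_getD (by omega), mul_add, mul_one]
    exact toFinset_take_add_two_sdiff hnd hi
  obtain ⟨i, rfl | rfl⟩ : ∃ i, j = 2 * i ∨ j = 2 * i + 1 := ⟨j / 2, by omega⟩
  · rw [permOfChain_getD_two_mul (by rw [chainOf_length]; omega), stepMax,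
      hstep i (by omega), natMax_pair (halt.getD_lt_of_even (by omega))]
  · rw [permOfChain_getD_two_mul_add_one (by rw [chainOf_length]; omega), stepMin,
      hstep i (by omega), natMin_pair (halt.getD_lt_of_even (by omega))]

end BS

/-- For a chordal building set `B` on `S` with no odd connected component, the map
sending an alternating `B`-permutation `x` to the chain `(∅,{x₁,x₂},…,S)` is a
bijection between alternating `B`-permutations of `S` and maximal chains of `P̂_B`
whose label sequence `μ_B` has no decreasing position. -/
theorem alternating_bijOn_maxChains (S : Finset ℕ) (B : Finset (Finset ℕ))
    (hB : BS.IsBuilding S B) (hc : BS.IsChordal B) (hno : BS.NoOddComp B S) :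
    Set.BijOn chainOf
      {L : List ℕ | BS.IsBPerm B S L ∧ BS.IsAlternating L}
      {c : List (Finset ℕ) | BS.IsMaxChain B S c ∧ ∀ i, ¬ BS.DecAt B c i} := by
  refine Set.InvOn.bijOn (f' := BS.permOfChain) ⟨?_, ?_⟩ ?_ ?_
  · rintro L ⟨hbp, halt⟩
    exact BS.permOfChain_chainOf hbp.1.1 halt (BS.even_length_of_isBPerm hB hno hbp)
  · rintro c ⟨hmc, hnd⟩
    exact BS.chainOf_permOfChain hmc (BS.isLinkedChain_of_isMaxChain hB hc hmc hnd)
  · rintro L ⟨hbp, halt⟩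
    exact ⟨BS.isMaxChain_chainOf hB hc hno hbp halt, BS.not_decAt_chainOf hB hbp halt⟩
  · rintro c ⟨hmc, hnd⟩
    have hlink := BS.isLinkedChain_of_isMaxChain hB hc hmc hnd
    exact ⟨BS.isBPerm_permOfChain hc hmc hlink, BS.isAlternating_permOfChain hB hlink hnd⟩
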